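/- arXiv:2303.17083 — 2 statements merged into one kernel-verified Lean document; each statement's English description precedes it below -/
import Mathlib

section
/- Let λ > 0, α > 0, T > 0, and for each N let η = T/N and define s_N by the recursion s^{(k+1)} = s^{(k)}(1 − ηλ)² + α²η with s^{(0)} = 0, setting s_N = s^{(N)}. Then lim_{N→∞} s_N = (α²/(2λ))(1 − e^{−2λT}). -/
open Filter Finset Topology

/-!
Unrolling the recursion gives a geometric sum in `q = (1 - ηλ)²`, and since
`1 - q = ηλ(2 - ηλ)` the factor `η` cancels:
`λ(2 - ηλ) s⁽ᵏ⁾ = α²(1 - (1 - ηλ)^(2k))`.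
With `η = T/N` and `k = N`, the left factor tends to `2λ` and `(1 - λT/N)^(2N)` to `e^(-2λT)`.
-/

theorem eq_mul_geom_sum_of_succ_eq_mul_add {R : Type*} [CommSemiring R] {x : ℕ → R} {q c : R}
    (h0 : x 0 = 0) (hsucc : ∀ k, x (k + 1) = x k * q + c) (k : ℕ) :
    x k = c * ∑ i ∈ range k, q ^ i := by
  induction k with
  | zero => simp [h0]
  | succ k ih => rw [hsucc, ih, geom_sum_succ]; ring

theorem mul_eq_of_succ_eq_mul_one_sub_sq_add {x : ℕ → ℝ} {η lam α : ℝ}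
    (h0 : x 0 = 0) (hsucc : ∀ k, x (k + 1) = x k * (1 - η * lam) ^ 2 + α ^ 2 * η) (k : ℕ) :
    lam * (2 - η * lam) * x k = α ^ 2 * (1 - (1 - η * lam) ^ (2 * k)) := by
  rw [eq_mul_geom_sum_of_succ_eq_mul_add h0 hsucc, pow_mul, ← mul_neg_geom_sum]
  ring

theorem tendsto_one_add_div_pow_two_mul_exp (t : ℝ) :
    Tendsto (fun n : ℕ ↦ (1 + t / n) ^ (2 * n)) atTop (𝓝 (Real.exp (2 * t))) := by
  simpa only [pow_mul', ← Real.exp_nat_mul, Nat.cast_ofNat]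
    using (Real.tendsto_one_add_div_pow_exp t).pow 2

theorem scalar_variance_recursion_limit_general
    (lam α T : ℝ) (hlam : 0 < lam)
    (s : ℕ → ℕ → ℝ)
    (h0 : ∀ N, s N 0 = 0)
    (hrec : ∀ N k, s N (k + 1) =
      s N k * (1 - (T / N) * lam) ^ 2 + α ^ 2 * (T / N)) :
    Tendsto (fun N : ℕ => s N N) atTop
      (nhds ((α ^ 2 / (2 * lam)) * (1 - Real.exp (-2 * lam * T)))) := by
  have hfactor : Tendsto (fun N : ℕ ↦ lam * (2 - T / N * lam)) atTop (𝓝 (2 * lam)) := by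
    have := ((tendsto_const_div_atTop_nhds_zero_nat T).mul_const lam).const_sub 2 |>.const_mul lam
    simpa [mul_comm] using this
  have hpow : Tendsto (fun N : ℕ ↦ α ^ 2 * (1 - (1 - T / N * lam) ^ (2 * N))) atTop
      (𝓝 (α ^ 2 * (1 - Real.exp (-2 * lam * T)))) := by
    have := ((tendsto_one_add_div_pow_two_mul_exp (-(lam * T))).const_sub 1).const_mul (α ^ 2)
    convert this using 4 with N
    · ring
    · ring_nf
  have hlim := hpow.div hfactor (by positivity)
  rw [div_mul_eq_mul_div]
  refine hlim.congr' ?_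
  filter_upwards [hfactor.eventually_ne (by positivity : 2 * lam ≠ 0)] with N hN
  rw [Pi.div_apply, div_eq_iff hN, ← mul_eq_of_succ_eq_mul_one_sub_sq_add (h0 N) (hrec N), mul_comm]

/-- Running the variance recursion N steps with step size η = T/N and letting N → ∞
gives the limit (α²/(2λ))(1 − e^{−2λT}). -/
theorem scalar_variance_recursion_limit
    (lam α T : ℝ) (hlam : 0 < lam) (hα : 0 < α) (hT : 0 < T)
    (s : ℕ → ℕ → ℝ)
    (h0 : ∀ N, s N 0 = 0)
    (hrec : ∀ N k, s N (k + 1) =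
      s N k * (1 - (T / N) * lam) ^ 2 + α ^ 2 * (T / N)) :
    Tendsto (fun N : ℕ => s N N) atTop
      (nhds ((α ^ 2 / (2 * lam)) * (1 - Real.exp (-2 * lam * T)))) :=
  scalar_variance_recursion_limit_general lam α T hlam s h0 hrec
end

section
/- Let L be a symmetric PSD Laplacian with eigenvalues 0 = λ₁ < λ₂ ≤ … ≤ λₙ and fix T > 0, α > 0. The limit as N → ∞ of the covariance recursion Σ^{(k+1)} = (I − (T/N)L)Σ^{(k)}(I − (T/N)L)ᵀ + α²(T/N)I after N steps from Σ^{(0)} = 0 equals U diag(α²T, θ₂, …, θₙ) Uᵀ, where θᵢ = (α²/(2λᵢ))(1 − e^{−2λᵢT}) and U diagonalizes L. -/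
/-!
Since `1 - (T/N) L = U diag(1 - (T/N) λᵢ) Uᵀ`, conjugation by `U` diagonalises the recursion and
the `i`-th eigenvalue of `Σ^{(N)}` is the geometric sum `α² (T/N) ∑_{j<N} (1 - T λᵢ/N)^{2j}`.
For `λᵢ = 0` this is exactly `α² T`; otherwise it equals
`α² (1 - (1 - T λᵢ/N)^{2N}) / (λᵢ (2 - T λᵢ/N))`, which tends to `α² (1 - e^{-2 λᵢ T}) / (2 λᵢ)`
because `(1 + x/N)^N → eˣ`.
-/

open Matrix Filter Finset Topology

section

variable {ι R : Type*} [Fintype ι] [DecidableEq ι] [CommRing R] {U : Matrix ι ι R}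

namespace Matrix

theorem conj_diagonal_mul_conj_diagonal (hU : U * Uᵀ = 1) (a b : ι → R) :
    U * diagonal a * Uᵀ * (U * diagonal b * Uᵀ) = U * diagonal (a * b) * Uᵀ := by
  have hUU : Uᵀ * U = 1 := mul_eq_one_comm.mp hU
  calc U * diagonal a * Uᵀ * (U * diagonal b * Uᵀ)
      = U * diagonal a * (Uᵀ * U) * diagonal b * Uᵀ := by simp only [Matrix.mul_assoc]
    _ = U * diagonal (a * b) * Uᵀ := by
      rw [hUU, Matrix.mul_one, Matrix.mul_assoc U, diagonal_mul_diagonal]; rfl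

theorem transpose_conj_diagonal (a : ι → R) : (U * diagonal a * Uᵀ)ᵀ = U * diagonal a * Uᵀ := by
  rw [transpose_mul, transpose_mul, diagonal_transpose, transpose_transpose, Matrix.mul_assoc]

theorem smul_one_eq_conj_diagonal (hU : U * Uᵀ = 1) (c : R) :
    c • (1 : Matrix ι ι R) = U * diagonal (fun _ => c) * Uᵀ := by
  rw [← smul_one_eq_diagonal, Matrix.mul_smul, Matrix.smul_mul, Matrix.mul_one, hU]

theorem one_sub_smul_conj_diagonal (hU : U * Uᵀ = 1) (t : R) (d : ι → R) :
    1 - t • (U * diagonal d * Uᵀ) = U * diagonal (fun i => 1 - t * d i) * Uᵀ := by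
  have : diagonal (fun i => 1 - t * d i) = 1 - t • diagonal d := by
    rw [← diagonal_one, ← diagonal_smul, ← diagonal_sub]; rfl
  rw [this, Matrix.mul_sub, Matrix.sub_mul, Matrix.mul_one, hU, Matrix.mul_smul, Matrix.smul_mul]

end Matrix

theorem covariance_recursion_eq_conj_diagonal (hU : U * Uᵀ = 1) (a : ι → R) (c : R) {S : ℕ → Matrix ι ι R} (h0 : S 0 = 0)
    (hrec : ∀ k, S (k + 1) = U * diagonal a * Uᵀ * S k * (U * diagonal a * Uᵀ)ᵀ + c • 1) (k : ℕ) :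
    S k = U * diagonal (fun i => c * ∑ j ∈ range k, (a i ^ 2) ^ j) * Uᵀ := by
  induction k with
  | zero => simp [h0]
  | succ k ih =>
    rw [hrec, ih, transpose_conj_diagonal, conj_diagonal_mul_conj_diagonal hU,
      conj_diagonal_mul_conj_diagonal hU, smul_one_eq_conj_diagonal hU, ← Matrix.add_mul,
      ← Matrix.mul_add, diagonal_add]
    congr 3
    funext i
    simp only [Pi.mul_apply, geom_sum_succ]
    ring

end

/-- Variance at time `T` of the `N`-step Euler–Maruyama scheme for `dX = -μ X dt + dW`, `X₀ = 0`. -/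
noncomputable def eulerMaruyamaOUVariance (μ T : ℝ) (N : ℕ) : ℝ :=
  T / N * ∑ j ∈ range N, ((1 - T / N * μ) ^ 2) ^ j

theorem eulerMaruyamaOUVariance_zero_left {N : ℕ} (hN : N ≠ 0) (T : ℝ) :
    eulerMaruyamaOUVariance 0 T N = T := by
  simp only [eulerMaruyamaOUVariance, mul_zero, sub_zero, one_pow, sum_const, card_range,
    nsmul_eq_mul, mul_one]
  field_simp

theorem eulerMaruyamaOUVariance_eq {μ T : ℝ} {N : ℕ} (hμ : μ ≠ 0) (h2 : 2 - T / N * μ ≠ 0) :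
    eulerMaruyamaOUVariance μ T N = (1 - ((1 - T / N * μ) ^ N) ^ 2) / (μ * (2 - T / N * μ)) := by
  have hgeom := geom_sum_mul ((1 - T / N * μ) ^ 2) N
  rw [eulerMaruyamaOUVariance, eq_div_iff (mul_ne_zero hμ h2), ← pow_mul, pow_mul']
  linear_combination (-1 : ℝ) * hgeom

theorem tendsto_eulerMaruyamaOUVariance {μ : ℝ} (hμ : μ ≠ 0) (T : ℝ) :
    Tendsto (eulerMaruyamaOUVariance μ T) atTop (𝓝 ((1 - Real.exp (-2 * μ * T)) / (2 * μ))) := by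
  have hstep : Tendsto (fun N : ℕ => T / N * μ) atTop (𝓝 0) := by
    simpa only [div_mul_eq_mul_div] using tendsto_const_div_atTop_nhds_zero_nat (T * μ)
  have hpow : Tendsto (fun N : ℕ => (1 - T / N * μ) ^ N) atTop (𝓝 (Real.exp (-(μ * T)))) := by
    refine (Real.tendsto_one_add_div_pow_exp (-(μ * T))).congr fun N => ?_
    ring
  have hlim := ((tendsto_const_nhds.sub (hpow.pow 2)).div
    (tendsto_const_nhds.mul (tendsto_const_nhds.sub hstep)) (by simpa using hμ) :
    Tendsto (fun N : ℕ => (1 - ((1 - T / N * μ) ^ N) ^ 2) / (μ * (2 - T / N * μ))) atTop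
      (𝓝 ((1 - Real.exp (-(μ * T)) ^ 2) / (μ * (2 - 0)))))
  have hval : (1 - Real.exp (-(μ * T)) ^ 2) / (μ * (2 - 0)) =
      (1 - Real.exp (-2 * μ * T)) / (2 * μ) := by
    rw [← Real.exp_nat_mul]
    ring_nf
  rw [hval] at hlim
  refine hlim.congr' ?_
  filter_upwards [hstep.eventually (gt_mem_nhds (by norm_num : (0 : ℝ) < 2))] with N hN
  exact (eulerMaruyamaOUVariance_eq hμ (by linarith)).symm

theorem covariance_recursion_limit_general
    {n : ℕ} (L U : Matrix (Fin n) (Fin n) ℝ) (lam : Fin n → ℝ)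
    (hU : U * Uᵀ = 1) (hUL : L = U * Matrix.diagonal lam * Uᵀ)
    (hn : 0 < n)
    (hlam0 : lam ⟨0, hn⟩ = 0) (hlampos : ∀ i : Fin n, i ≠ ⟨0, hn⟩ → 0 < lam i)
    (α T : ℝ)
    (S : ℕ → ℕ → Matrix (Fin n) (Fin n) ℝ) (h0 : ∀ N, S N 0 = 0)
    (hrec : ∀ N k, S N (k + 1) =
      ((1 : Matrix (Fin n) (Fin n) ℝ) - (T / N) • L) * S N k *
        ((1 : Matrix (Fin n) (Fin n) ℝ) - (T / N) • L)ᵀ +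
      (α ^ 2 * (T / N)) • (1 : Matrix (Fin n) (Fin n) ℝ)) :
    Tendsto (fun N : ℕ => S N N) atTop
      (nhds (U * Matrix.diagonal (fun i : Fin n =>
        if i = ⟨0, hn⟩ then α ^ 2 * T
        else (α ^ 2 / (2 * lam i)) * (1 - Real.exp (-2 * lam i * T))) * Uᵀ)) := by
  have hclosed (N : ℕ) : S N N =
      U * diagonal (fun i => α ^ 2 * eulerMaruyamaOUVariance (lam i) T N) * Uᵀ := by
    simp only [hUL, one_sub_smul_conj_diagonal hU] at hrec
    simp only [covariance_recursion_eq_conj_diagonal hU _ _ (h0 N) (hrec N), mul_assoc,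
      eulerMaruyamaOUVariance]
  have hentry (i : Fin n) : Tendsto (fun N => α ^ 2 * eulerMaruyamaOUVariance (lam i) T N) atTop
      (𝓝 (if i = ⟨0, hn⟩ then α ^ 2 * T
        else (α ^ 2 / (2 * lam i)) * (1 - Real.exp (-2 * lam i * T)))) := by
    split_ifs with hi
    · refine tendsto_const_nhds.congr' ?_
      filter_upwards [eventually_ne_atTop 0] with N hN
      rw [hi, hlam0, eulerMaruyamaOUVariance_zero_left hN]
    · convert (tendsto_eulerMaruyamaOUVariance (hlampos i hi).ne' T).const_mul (α ^ 2) using 2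
      ring
  simp only [hclosed]
  exact (tendsto_const_nhds.mul
    ((continuous_id.matrix_diagonal.tendsto _).comp (tendsto_pi_nhds.2 hentry))).mul
    tendsto_const_nhds

/-- Limit of the covariance recursion: after N steps with step size T/N and N → ∞,
the covariance converges to U diag(α²T, θ₂,…,θₙ) Uᵀ with
θᵢ = (α²/(2λᵢ))(1 − e^{−2λᵢT}). -/
theorem covariance_recursion_limit
    {n : ℕ} (L U : Matrix (Fin n) (Fin n) ℝ) (lam : Fin n → ℝ)
    (hU : U * Uᵀ = 1) (hUL : L = U * Matrix.diagonal lam * Uᵀ)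
    (hpsd : L.PosSemidef) (hsymm : Lᵀ = L)
    (hn : 0 < n)
    (hlam0 : lam ⟨0, hn⟩ = 0) (hlampos : ∀ i : Fin n, i ≠ ⟨0, hn⟩ → 0 < lam i)
    (α T : ℝ) (hα : 0 < α) (hT : 0 < T)
    (S : ℕ → ℕ → Matrix (Fin n) (Fin n) ℝ) (h0 : ∀ N, S N 0 = 0)
    (hrec : ∀ N k, S N (k + 1) =
      ((1 : Matrix (Fin n) (Fin n) ℝ) - (T / N) • L) * S N k *
        ((1 : Matrix (Fin n) (Fin n) ℝ) - (T / N) • L)ᵀ +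
      (α ^ 2 * (T / N)) • (1 : Matrix (Fin n) (Fin n) ℝ)) :
    Tendsto (fun N : ℕ => S N N) atTop
      (nhds (U * Matrix.diagonal (fun i : Fin n =>
        if i = ⟨0, hn⟩ then α ^ 2 * T
        else (α ^ 2 / (2 * lam i)) * (1 - Real.exp (-2 * lam i * T))) * Uᵀ)) :=
  covariance_recursion_limit_general L U lam hU hUL hn hlam0 hlampos α T S h0 hrec
end
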